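/- Let a > 1 be irrational with a^k irrational for all positive integers k, and let b ∈ (0,1) be rational with 1/a > b. Let H = {(x,y) ∈ [0,1]² : y = a·x or y = b·x}. Then the only point x ∈ ⋆_{i=1}^{∞} H^{-1} with σ^m(x) = x for some positive integer m is the constant zero sequence (0,0,0,…). -/
import Mathlib


/-- The infinite Mahavier product `⋆_{i=1}^∞ G⁻¹`. -/
def mahInf {X : Type*} (G : Set (X × X)) : Set (ℕ → X) :=
  {x | ∀ i : ℕ, (x (i + 1), x i) ∈ G}

/-- The shift map. -/
def shift {X : Type*} (x : ℕ → X) : ℕ → X := fun i => x (i + 1)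

lemma shift_iter {X : Type*} (x : ℕ → X) : ∀ k i, shift^[k] x i = x (i + k) := by
  intro k
  induction k generalizing x with
  | zero => intro i; simp
  | succ k ih =>
    intro i
    rw [Function.iterate_succ_apply, ih (shift x) i]
    rfl

theorem stmt_17 (a b : ℝ) (ha : 1 < a) (hairr : Irrational a)
    (hirr : ∀ k : ℕ, 0 < k → Irrational (a ^ k))
    (hb : b ∈ Set.Ioo (0 : ℝ) 1) (hbrat : ∃ q : ℚ, b = (q : ℝ)) (hab : 1 / a > b)
    (H : Set (ℝ × ℝ))
    (hH : H = {p : ℝ × ℝ | p.1 ∈ Set.Icc (0 : ℝ) 1 ∧ p.2 ∈ Set.Icc (0 : ℝ) 1 ∧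
      (p.2 = a * p.1 ∨ p.2 = b * p.1)}) :
    ∀ x ∈ mahInf H, ((∃ m : ℕ, 0 < m ∧ shift^[m] x = x) ↔ x = fun _ => (0 : ℝ)) := by
  intro x hx
  constructor
  · rintro ⟨m, hm, hper⟩
    have hstep : ∀ i, x i = a * x (i+1) ∨ x i = b * x (i+1) := by
      intro i
      have := hx i
      rw [hH] at this
      exact this.2.2
    have hprod : ∀ n i, ∃ j ≤ n, x i = a ^ j * b ^ (n - j) * x (i + n) := by
      intro n
      induction n with
      | zero => intro i; exact ⟨0, le_refl 0, by simp⟩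
      | succ n ih =>
        intro i
        obtain ⟨j, hj, hje⟩ := ih (i+1)
        have hidx : i + (n + 1) = (i + 1) + n := by omega
        rcases hstep i with h | h
        · refine ⟨j + 1, by omega, ?_⟩
          have h1 : n + 1 - (j + 1) = n - j := by omega
          rw [hidx, h1, h, hje]; ring
        · refine ⟨j, by omega, ?_⟩
          have h1 : n + 1 - j = (n - j) + 1 := by omega
          rw [hidx, h1, h, hje]; ring
    funext i
    show x i = 0
    by_contra hne
    obtain ⟨j, hj, he⟩ := hprod m i
    have hxm : x (i + m) = x i := by
      have := congrFun hper i
      rw [shift_iter x m i] at this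
      exact this
    rw [hxm] at he
    have hc : a ^ j * b ^ (m - j) = 1 := by
      have h2 : a ^ j * b ^ (m - j) * x i = 1 * x i := by linarith [he]
      exact mul_right_cancel₀ hne h2
    rcases Nat.eq_zero_or_pos j with hj0 | hj0
    · subst hj0
      simp at hc
      have : b ^ m < 1 := pow_lt_one₀ hb.1.le hb.2 hm.ne'
      linarith [hc]
    · obtain ⟨q, hq⟩ := hbrat
      have hbne : b ^ (m - j) ≠ 0 := pow_ne_zero _ (ne_of_gt hb.1)
      have haj : a ^ j = (b ^ (m - j))⁻¹ := by
        field_simp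
        linarith [hc]
      have : a ^ j = ((q ^ (m - j))⁻¹ : ℚ) := by
        rw [haj, hq]
        push_cast
        ring
      exact (hirr j hj0) ⟨(q ^ (m - j))⁻¹, this.symm⟩
  · rintro rfl
    exact ⟨1, one_pos, rfl⟩
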